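/- Let g ≥ 2 and h ≥ 1 be integers with 2h ≤ g, let ε > 0, and let a_{2h+2}, …, a_{2g+2} be pairwise distinct complex numbers with |a_r| > ε and |a_r| > ε² for every r. Define the polynomial G(s,x,y,z) = (x^{2h+1} − s^{2(2h+1)}·z^{2h+1})·∏_{r=2h+2}^{2g+2}(x − a_r·z) − y²·z^{2g} on ℂ⁴. Then the set of points (s,x,y,z) with |s| ≤ ε and (x,y,z) ≠ (0,0,0) at which G and all four partial derivatives ∂G/∂s, ∂G/∂x, ∂G/∂y, ∂G/∂z vanish is exactly {(s, 0, y, 0) : |s| ≤ ε, y ≠ 0} ∪ {(0, 0, 0, z) : z ≠ 0}. (Equivalently: the singular locus of Y_{h,g−h}^{(0)} ⊂ D_ε × ℂP² is (D_ε × {(0:1:0)}) ∪ {(0,(0:0:1))}.) -/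

import Mathlib

/-!
Write `G = A·P − y²zⁿ` with `A = xᵐ − s²ᵐzᵐ` and `P = ∏ (x − a_r z)`. Since `∂G/∂y = −2yzⁿ`, a
critical zero has `y = 0` or `z = 0`. If `z = 0`, then `G = x^(m + #S)` forces `x = 0`. If `z ≠ 0`
and `y = 0`, the factor `P` cannot vanish: at `x = a_r z` the derivative `∂G/∂x` equals
`A · ∏_{j ≠ r} (a_r − a_j) z`, where `A ≠ 0` because `|a_r| > |s|²` and the product is nonzero
because the `a_j` are distinct. Then `∂G/∂s = −2m s²ᵐ⁻¹ zᵐ P` forces `s = 0`, and `G = xᵐ P`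
forces `x = 0`.
-/

open Finset

def IsCriticalZero (F : ℂ → ℂ → ℂ → ℂ → ℂ) (s x y z : ℂ) : Prop :=
  F s x y z = 0 ∧ deriv (fun s' => F s' x y z) s = 0 ∧ deriv (fun x' => F s x' y z) x = 0 ∧
    deriv (fun y' => F s x y' z) y = 0 ∧ deriv (fun z' => F s x y z') z = 0

section LocalModel

variable {ι : Type*} {m n : ℕ} {S : Finset ι} {a : ι → ℂ} {s x y z : ℂ}

def localModel (m n : ℕ) (S : Finset ι) (a : ι → ℂ) (s x y z : ℂ) : ℂ :=
  (x ^ m - s ^ (2 * m) * z ^ m) * ∏ r ∈ S, (x - a r * z) - y ^ 2 * z ^ n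

theorem hasDerivAt_localModel_s :
    HasDerivAt (fun s' => localModel m n S a s' x y z)
      (-(2 * m * s ^ (2 * m - 1) * z ^ m) * ∏ r ∈ S, (x - a r * z)) s := by
  refine (((((hasDerivAt_pow (2 * m) s).mul_const (z ^ m)).const_sub (x ^ m)).mul_const
    (∏ r ∈ S, (x - a r * z))).sub_const (y ^ 2 * z ^ n)).congr_deriv ?_
  push_cast; ring

theorem hasDerivAt_localModel_x :
    HasDerivAt (fun x' => localModel m n S a s x' y z)
      (m * x ^ (m - 1) * ∏ r ∈ S, (x - a r * z) +
        (x ^ m - s ^ (2 * m) * z ^ m) * deriv (fun x' => ∏ r ∈ S, (x' - a r * z)) x) x := by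
  have hP : DifferentiableAt ℂ (fun x' => ∏ r ∈ S, (x' - a r * z)) x := by fun_prop
  exact (((hasDerivAt_pow m x).sub_const _).mul hP.hasDerivAt).sub_const _

theorem hasDerivAt_localModel_y :
    HasDerivAt (fun y' => localModel m n S a s x y' z) (-(2 * y * z ^ n)) y := by
  refine (((hasDerivAt_pow 2 y).mul_const (z ^ n)).const_sub
    ((x ^ m - s ^ (2 * m) * z ^ m) * ∏ r ∈ S, (x - a r * z))).congr_deriv ?_
  push_cast; ring

theorem hasDerivAt_localModel_z :
    HasDerivAt (fun z' => localModel m n S a s x y z')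
      (-(s ^ (2 * m) * (m * z ^ (m - 1))) * ∏ r ∈ S, (x - a r * z) +
        (x ^ m - s ^ (2 * m) * z ^ m) * deriv (fun z' => ∏ r ∈ S, (x - a r * z')) z -
        y ^ 2 * (n * z ^ (n - 1))) z := by
  have hP : DifferentiableAt ℂ (fun z' => ∏ r ∈ S, (x - a r * z')) z := by fun_prop
  exact ((((hasDerivAt_pow m z).const_mul _).const_sub _).mul hP.hasDerivAt).sub
    ((hasDerivAt_pow n z).const_mul _)

theorem hasDerivAt_prod_sub_mul_of_mem [DecidableEq ι] {r : ι} (hr : r ∈ S) :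
    HasDerivAt (fun x' => ∏ j ∈ S, (x' - a j * z)) (∏ j ∈ S.erase r, (a r * z - a j * z))
      (a r * z) := by
  have hfun : (fun x' => ∏ j ∈ S, (x' - a j * z)) =
      fun x' => (x' - a r * z) * ∏ j ∈ S.erase r, (x' - a j * z) :=
    funext fun x' => (mul_prod_erase S (fun j => x' - a j * z) hr).symm
  have hQ : DifferentiableAt ℂ (fun x' => ∏ j ∈ S.erase r, (x' - a j * z)) (a r * z) := by
    fun_prop
  rw [hfun]
  exact (((hasDerivAt_id' _).sub_const _).fun_mul hQ.hasDerivAt).congr_deriv (by simp)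

theorem prod_erase_sub_mul_ne_zero [DecidableEq ι] (ha : Set.InjOn a S) {r : ι} (hr : r ∈ S)
    (hz : z ≠ 0) : ∏ j ∈ S.erase r, (a r * z - a j * z) ≠ 0 :=
  prod_ne_zero_iff.mpr fun j hj => by
    have hne : a r ≠ a j := fun h => ne_of_mem_erase hj (ha (mem_of_mem_erase hj) hr h.symm)
    rw [← sub_mul]
    exact mul_ne_zero (sub_ne_zero.mpr hne) hz

theorem pow_sub_pow_mul_ne_zero {b : ℂ} (hb : ‖s‖ ^ 2 < ‖b‖) (hm : m ≠ 0) (hz : z ≠ 0) :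
    (b * z) ^ m - s ^ (2 * m) * z ^ m ≠ 0 := by
  have hpow : b ^ m ≠ (s ^ 2) ^ m := fun h => by
    have := congrArg norm h
    rw [norm_pow, norm_pow, norm_pow] at this
    exact (pow_lt_pow_left₀ hb (by positivity) hm).ne' this
  rw [mul_pow, pow_mul, ← sub_mul]
  exact mul_ne_zero (sub_ne_zero.mpr hpow) (pow_ne_zero _ hz)

theorem prod_ne_zero_of_deriv_localModel_x_eq_zero (ha : Set.InjOn a S)
    (hs : ∀ r ∈ S, ‖s‖ ^ 2 < ‖a r‖) (hm : m ≠ 0) (hz : z ≠ 0)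
    (hdx : deriv (fun x' => localModel m n S a s x' y z) x = 0) :
    ∏ r ∈ S, (x - a r * z) ≠ 0 := by
  classical
  intro hP
  obtain ⟨r, hr, hxr⟩ := prod_eq_zero_iff.mp hP
  obtain rfl : x = a r * z := sub_eq_zero.mp hxr
  rw [hasDerivAt_localModel_x.deriv, hP, mul_zero, zero_add,
    (hasDerivAt_prod_sub_mul_of_mem hr).deriv] at hdx
  exact mul_ne_zero (pow_sub_pow_mul_ne_zero (hs r hr) hm hz)
    (prod_erase_sub_mul_ne_zero ha hr hz) hdx

theorem isCriticalZero_localModel_of_x_z_eq_zero (hm : 2 ≤ m) (hn : 2 ≤ n) :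
    IsCriticalZero (localModel m n S a) s 0 y 0 := by
  refine ⟨?_, hasDerivAt_localModel_s.deriv.trans ?_, hasDerivAt_localModel_x.deriv.trans ?_,
    hasDerivAt_localModel_y.deriv.trans ?_, hasDerivAt_localModel_z.deriv.trans ?_⟩ <;>
  simp [localModel, zero_pow (by omega : m ≠ 0), zero_pow (by omega : m - 1 ≠ 0),
    zero_pow (by omega : n ≠ 0), zero_pow (by omega : n - 1 ≠ 0)]

theorem isCriticalZero_localModel_zero_zero_zero (hm : 2 ≤ m) :
    IsCriticalZero (localModel m n S a) 0 0 0 z := by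
  refine ⟨?_, hasDerivAt_localModel_s.deriv.trans ?_, hasDerivAt_localModel_x.deriv.trans ?_,
    hasDerivAt_localModel_y.deriv.trans ?_, hasDerivAt_localModel_z.deriv.trans ?_⟩ <;>
  simp [localModel, zero_pow (by omega : m ≠ 0), zero_pow (by omega : m - 1 ≠ 0),
    zero_pow (by omega : 2 * m ≠ 0), zero_pow (by omega : 2 * m - 1 ≠ 0)]

theorem isCriticalZero_localModel_iff (hm : 2 ≤ m) (hn : 2 ≤ n) (ha : Set.InjOn a S)
    (hs : ∀ r ∈ S, ‖s‖ ^ 2 < ‖a r‖) :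
    ¬(x = 0 ∧ y = 0 ∧ z = 0) ∧ IsCriticalZero (localModel m n S a) s x y z ↔
      (x = 0 ∧ z = 0 ∧ y ≠ 0) ∨ (s = 0 ∧ x = 0 ∧ y = 0 ∧ z ≠ 0) := by
  have hm0 : m ≠ 0 := by omega
  have hn0 : n ≠ 0 := by omega
  have hm1 : 2 * m - 1 ≠ 0 := by omega
  constructor
  · rintro ⟨hne, hG, hds, hdx, hdy, -⟩
    rw [hasDerivAt_localModel_s.deriv] at hds
    rw [hasDerivAt_localModel_y.deriv] at hdy
    rcases eq_or_ne z 0 with rfl | hz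
    · simp only [localModel, mul_zero, sub_zero, zero_pow hm0, zero_pow hn0, prod_const,
        ← pow_add] at hG
      have hx : x = 0 := pow_eq_zero_iff (by omega) |>.mp hG
      exact Or.inl ⟨hx, rfl, fun hy => hne ⟨hx, hy, rfl⟩⟩
    · obtain rfl : y = 0 := by simpa [hz, hn0] using hdy
      have hP := prod_ne_zero_of_deriv_localModel_x_eq_zero ha hs hm0 hz hdx
      obtain rfl : s = 0 := by simpa [hP, hz, hm0, hm1] using hds
      have hx : x = 0 := by simpa [localModel, zero_pow, hP, hm0] using hG
      exact Or.inr ⟨rfl, hx, rfl, hz⟩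
  · rintro (⟨rfl, rfl, hy⟩ | ⟨rfl, rfl, rfl, hz⟩)
    · exact ⟨fun h => hy h.2.1, isCriticalZero_localModel_of_x_z_eq_zero hm hn⟩
    · exact ⟨fun h => hz h.2.2, isCriticalZero_localModel_zero_zero_zero hm⟩

end LocalModel

theorem stmt_3_general (g h : ℕ) (hg : 2 ≤ g) (hh : 1 ≤ h)
    (ε : ℝ) (hε : 0 < ε) (a : ℕ → ℂ)
    (ha_inj : Set.InjOn a ↑(Finset.Icc (2 * h + 2) (2 * g + 2)))
    (ha_abs2 : ∀ r ∈ Finset.Icc (2 * h + 2) (2 * g + 2), ε ^ 2 < ‖a r‖)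
    (G : ℂ → ℂ → ℂ → ℂ → ℂ)
    (hG : ∀ s x y z, G s x y z =
      (x ^ (2 * h + 1) - s ^ (2 * (2 * h + 1)) * z ^ (2 * h + 1)) *
        (∏ r ∈ Finset.Icc (2 * h + 2) (2 * g + 2), (x - a r * z)) -
        y ^ 2 * z ^ (2 * g)) :
    ∀ s x y z : ℂ,
      (‖s‖ ≤ ε ∧ ¬(x = 0 ∧ y = 0 ∧ z = 0) ∧ G s x y z = 0 ∧
        deriv (fun s' => G s' x y z) s = 0 ∧ deriv (fun x' => G s x' y z) x = 0 ∧
        deriv (fun y' => G s x y' z) y = 0 ∧ deriv (fun z' => G s x y z') z = 0) ↔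
      ((‖s‖ ≤ ε ∧ x = 0 ∧ z = 0 ∧ y ≠ 0) ∨
        (s = 0 ∧ x = 0 ∧ y = 0 ∧ z ≠ 0)) := by
  obtain rfl : G = localModel (2 * h + 1) (2 * g) (Icc (2 * h + 2) (2 * g + 2)) a :=
    funext fun s => funext fun x => funext fun y => funext fun z => hG s x y z
  intro s x y z
  by_cases hs : ‖s‖ ≤ ε
  · rw [and_iff_right hs, and_iff_right hs]
    exact isCriticalZero_localModel_iff (by omega) (by omega) ha_inj
      fun r hr => (pow_le_pow_left₀ (norm_nonneg s) hs 2).trans_lt (ha_abs2 r hr)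
  · simp only [hs, false_and, false_or, false_iff]
    rintro ⟨rfl, -⟩
    exact hs (by simpa using hε.le)

/-- The singular locus of the local model `Y_{h,g−h}^{(0)} ⊂ D_ε × ℂP²`, cut
out by `(x^{2h+1} − s^{2(2h+1)} z^{2h+1})·∏_{r=2h+2}^{2g+2}(x − a_r z) − y² z^{2g} = 0`,
is `(D_ε × {(0:1:0)}) ∪ {(0,(0:0:1))}`. -/
theorem stmt_3 (g h : ℕ) (hg : 2 ≤ g) (hh : 1 ≤ h) (hhg : 2 * h ≤ g)
    (ε : ℝ) (hε : 0 < ε) (a : ℕ → ℂ)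
    (ha_inj : Set.InjOn a ↑(Finset.Icc (2 * h + 2) (2 * g + 2)))
    (ha_abs : ∀ r ∈ Finset.Icc (2 * h + 2) (2 * g + 2), ε < ‖a r‖)
    (ha_abs2 : ∀ r ∈ Finset.Icc (2 * h + 2) (2 * g + 2), ε ^ 2 < ‖a r‖)
    (G : ℂ → ℂ → ℂ → ℂ → ℂ)
    (hG : ∀ s x y z, G s x y z =
      (x ^ (2 * h + 1) - s ^ (2 * (2 * h + 1)) * z ^ (2 * h + 1)) *
        (∏ r ∈ Finset.Icc (2 * h + 2) (2 * g + 2), (x - a r * z)) -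
        y ^ 2 * z ^ (2 * g)) :
    ∀ s x y z : ℂ,
      (‖s‖ ≤ ε ∧ ¬(x = 0 ∧ y = 0 ∧ z = 0) ∧ G s x y z = 0 ∧
        deriv (fun s' => G s' x y z) s = 0 ∧ deriv (fun x' => G s x' y z) x = 0 ∧
        deriv (fun y' => G s x y' z) y = 0 ∧ deriv (fun z' => G s x y z') z = 0) ↔
      ((‖s‖ ≤ ε ∧ x = 0 ∧ z = 0 ∧ y ≠ 0) ∨
        (s = 0 ∧ x = 0 ∧ y = 0 ∧ z ≠ 0)) :=
  stmt_3_general g h hg hh ε hε a ha_inj ha_abs2 G hG
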